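/- arXiv:2405.19280 — 3 statements merged into one kernel-verified Lean document; each statement's English description precedes it below -/
import Mathlib

section
/- Let B^n = ∏_{i=1}^n [[b_i,1],[1,0]] be the path matrix with entries in the free noncommutative algebra over F_2, and let ℓ denote the number of monomials in the support. For every odd n ≥ 1, ℓ(1 + B^n_{11}) = F_{n+1} + 1, and this number is even if and only if n is not congruent to 2 modulo 3. -/
/-!
The entry `B^n_{11}` is a continuant: `B^{n+2}_{11} = B^{n+1}_{11} b_{n+2} + B^n_{11}`.
Every monomial of `B^n_{11}` only involves `b_1, …, b_n`, while every monomial of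
`B^{n+1}_{11} b_{n+2}` ends in `b_{n+2}`, so the two summands have disjoint supports and the
support sizes obey the Fibonacci recursion. Every monomial of `B^n_{11}` has length `≡ n (mod 2)`,
so for odd `n` the constant `1` is a new monomial. Finally `F_m` is even iff `3 ∣ m`,
as `F_{m+3} = F_m + 2 F_{m+1}`.
-/

/-- The free noncommutative algebra over `ZMod 2` on countably many
indeterminates, realized as the monoid algebra of the free monoid on `ℕ`. -/
noncomputable abbrev A := MonoidAlgebra (ZMod 2) (FreeMonoid ℕ)

/-- The `i`-th indeterminate `b_i`. -/
noncomputable def b (i : ℕ) : A := MonoidAlgebra.single (FreeMonoid.of i) 1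

/-- The elementary path matrix `[[b_i, 1], [1, 0]]`. -/
noncomputable def PM (i : ℕ) : Matrix (Fin 2) (Fin 2) A := !![b i, 1; 1, 0]

/-- The path matrix `B^n = ∏_{i=1}^n [[b_i, 1], [1, 0]]` (ordered product). -/
noncomputable def B (n : ℕ) : Matrix (Fin 2) (Fin 2) A :=
  ((List.range n).map (fun i => PM (i + 1))).prod

/-- The number of monomials in the support of `p`. -/
noncomputable def ell (p : A) : ℕ := p.coeff.support.card

theorem Nat.even_fib_iff (n : ℕ) : Even (Nat.fib n) ↔ 3 ∣ n := by
  induction n using Nat.strong_induction_on with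
  | _ n ih =>
    match n with
    | 0 | 1 | 2 => decide
    | m + 3 =>
      have : Nat.fib (m + 3) = Nat.fib m + 2 * Nat.fib (m + 1) := by
        simp only [Nat.fib_add_two]; ring
      rw [this, Nat.even_add, ih m (by omega)]
      simp [Nat.dvd_add_self_right]

theorem MonoidAlgebra.card_support_one_add {k G : Type*} [Semiring k] [Nontrivial k] [Monoid G]
    (p : MonoidAlgebra k G) (h : 1 ∉ p.coeff.support) :
    (1 + p).coeff.support.card = p.coeff.support.card + 1 := by
  classical
  rw [MonoidAlgebra.coeff_add, MonoidAlgebra.one_def, MonoidAlgebra.coeff_single,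
    Finsupp.support_single_add h one_ne_zero, Finset.card_cons]

open MonoidAlgebra

theorem support_b (i : ℕ) : (b i).coeff.support = {FreeMonoid.of i} := by
  rw [b, coeff_single, Finsupp.support_single _ one_ne_zero]

theorem support_mul_b (p : A) (i : ℕ) :
    (p * b i).coeff.support = p.coeff.support.map (mulRightEmbedding (FreeMonoid.of i)) :=
  support_coeff_mul_single p 1 (by simp) (FreeMonoid.of i)

theorem B_succ (n : ℕ) : B (n + 1) = B n * PM (n + 1) := by
  simp [B, List.range_succ]

theorem B_succ_zero_one (n : ℕ) : B (n + 1) 0 1 = B n 0 0 := by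
  simp [B_succ, PM, Matrix.mul_apply]

theorem B_succ_zero_zero (n : ℕ) : B (n + 1) 0 0 = B n 0 0 * b (n + 1) + B n 0 1 := by
  simp [B_succ, PM, Matrix.mul_apply]

theorem B_zero_zero_zero : B 0 0 0 = 1 := rfl

theorem B_one_zero_zero : B 1 0 0 = b 1 := by
  simp [B, PM]

theorem B_add_two_zero_zero (n : ℕ) :
    B (n + 2) 0 0 = B (n + 1) 0 0 * b (n + 2) + B n 0 0 := by
  rw [B_succ_zero_zero, B_succ_zero_one]

theorem mem_support_B_add_two {n : ℕ} {w : FreeMonoid ℕ}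
    (hw : w ∈ (B (n + 2) 0 0).coeff.support) :
    (∃ v ∈ (B (n + 1) 0 0).coeff.support, v * FreeMonoid.of (n + 2) = w) ∨
      w ∈ (B n 0 0).coeff.support := by
  classical
  rw [B_add_two_zero_zero, coeff_add] at hw
  simpa [support_mul_b] using Finsupp.support_add hw

theorem length_mod_two_of_mem_support_B {n : ℕ} {w : FreeMonoid ℕ}
    (hw : w ∈ (B n 0 0).coeff.support) : w.length % 2 = n % 2 := by
  induction n using Nat.twoStepInduction generalizing w with
  | zero => simp_all [B_zero_zero_zero, one_def]
  | one => simp_all [B_one_zero_zero, support_b]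
  | more n ih₀ ih₁ =>
    rcases mem_support_B_add_two hw with ⟨v, hv, rfl⟩ | hw
    · have := ih₁ hv
      simp only [FreeMonoid.length_mul, FreeMonoid.length_of]
      omega
    · have := ih₀ hw
      omega

theorem le_of_mem_toList_of_mem_support_B {n : ℕ} {w : FreeMonoid ℕ}
    (hw : w ∈ (B n 0 0).coeff.support) {x : ℕ} (hx : x ∈ w.toList) : x ≤ n := by
  induction n using Nat.twoStepInduction generalizing w with
  | zero => simp_all [B_zero_zero_zero, one_def]
  | one => simp_all [B_one_zero_zero, support_b]
  | more n ih₀ ih₁ =>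
    rcases mem_support_B_add_two hw with ⟨v, hv, rfl⟩ | hw
    · simp only [FreeMonoid.toList_mul, FreeMonoid.toList_of, List.mem_append,
        List.mem_singleton] at hx
      rcases hx with hx | rfl
      · exact (ih₁ hv hx).trans (by omega)
      · rfl
    · exact (ih₀ hw hx).trans (by omega)

theorem disjoint_support_B_add_two (n : ℕ) :
    Disjoint (B (n + 1) 0 0 * b (n + 2)).coeff.support (B n 0 0).coeff.support := by
  rw [support_mul_b, Finset.disjoint_left]
  rintro _ hw hw'
  obtain ⟨v, -, rfl⟩ := Finset.mem_map.1 hw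
  have := le_of_mem_toList_of_mem_support_B hw' (x := n + 2) (by simp)
  omega

theorem card_support_B (n : ℕ) : (B n 0 0).coeff.support.card = Nat.fib (n + 1) := by
  induction n using Nat.twoStepInduction with
  | zero => simp [B_zero_zero_zero, one_def]
  | one => simp [B_one_zero_zero, support_b]
  | more n ih₀ ih₁ =>
    classical
    rw [B_add_two_zero_zero, coeff_add, Finsupp.support_add_eq (disjoint_support_B_add_two n),
      Finset.card_union_of_disjoint (disjoint_support_B_add_two n), support_mul_b,
      Finset.card_map, ih₁, ih₀, Nat.fib_add_two (n := n + 1), add_comm]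

theorem length_differential_a1_general (n : ℕ) (hodd : Odd n) :
    ell (1 + B n 0 0) = Nat.fib (n + 1) + 1 ∧
    (Even (Nat.fib (n + 1) + 1) ↔ ¬ n % 3 = 2) := by
  have h_one : 1 ∉ (B n 0 0).coeff.support := fun h => by
    simpa [Nat.odd_iff.1 hodd] using length_mod_two_of_mem_support_B h
  refine ⟨by rw [ell, card_support_one_add _ h_one, card_support_B], ?_⟩
  rw [Nat.even_add_one, Nat.even_fib_iff]
  omega

/-- For odd , the length of  is , which
is even iff  is not congruent to  mod . -/
theorem length_differential_a1 (n : ℕ) (hn : 1 ≤ n) (hodd : Odd n) :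
    ell (1 + B n 0 0) = Nat.fib (n + 1) + 1 ∧
    (Even (Nat.fib (n + 1) + 1) ↔ ¬ n % 3 = 2) :=
  length_differential_a1_general n hodd
end

section
/- Let W_1, …, W_k be elements of the free noncommutative algebra over F_2 on an indexed family of indeterminates, such that: each W_i has zero constant term, the sets of indeterminates occurring in the monomials of the W_i are pairwise disjoint, and each W_i has an odd number of monomials in its support. Then the element 1 + W_1·W_2·⋯·W_k has an even number of monomials in its support, namely 1 + ∏_i ℓ(W_i). -/
/-- The set of indeterminates occurring in the monomials of `p`. -/
noncomputable def lettersOf (p : A) : Set ℕ :=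
  {x | ∃ w ∈ p.coeff.support, x ∈ FreeMonoid.toList w}

/-- The number of occurrences of the letter `i` in the word `w`. -/
def countLetter (i : ℕ) (w : FreeMonoid ℕ) : ℕ := (FreeMonoid.toList w).count i

/-- The maximal number of occurrences of the letter `i` in a word of the
support of `p`. -/
noncomputable def maxLetter (i : ℕ) (p : A) : ℕ := p.coeff.support.sup (countLetter i)

/-- The number of words in the support of `p` containing exactly
`maxLetter i p` occurrences of the letter `i`. -/
noncomputable def tau (i : ℕ) (p : A) : ℕ :=
  (p.coeff.support.filter (fun w => countLetter i w = maxLetter i p)).card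

namespace FreeMonoid

variable {α : Type*}

theorem eq_one_and_eq_one_of_mul_eq_one {u v : FreeMonoid α} (h : u * v = 1) :
    u = 1 ∧ v = 1 := by
  have h' : u.toList ++ v.toList = [] := by simpa using congrArg toList h
  obtain ⟨hu, hv⟩ := List.append_eq_nil_iff.mp h'
  exact ⟨toList.injective hu, toList.injective hv⟩

theorem uniqueMul_one_one (s t : Finset (FreeMonoid α)) : UniqueMul s t 1 1 :=
  fun _ _ _ _ h => eq_one_and_eq_one_of_mul_eq_one (h.trans (mul_one 1))

open Classical in
theorem toList_mul_filter_eq {S : Set α} {u v : FreeMonoid α} (hu : ∀ x ∈ u.toList, x ∈ S)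
    (hv : ∀ x ∈ v.toList, x ∉ S) : (u * v).toList.filter (· ∈ S) = u.toList := by
  rw [toList_mul, List.filter_append, List.filter_eq_self.mpr (by simpa using hu),
    List.filter_eq_nil_iff.mpr (by simpa using hv), List.append_nil]

theorem injOn_mul_of_disjoint {S T : Set α} (hST : Disjoint S T) :
    Set.InjOn (fun w : FreeMonoid α × FreeMonoid α => w.1 * w.2)
      {w | (∀ x ∈ w.1.toList, x ∈ S) ∧ ∀ x ∈ w.2.toList, x ∈ T} := by
  rintro ⟨u, v⟩ ⟨hu, hv⟩ ⟨u', v'⟩ ⟨hu', hv'⟩ (h : u * v = u' * v')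
  have hvS : ∀ x ∈ v.toList, x ∉ S := fun x hx => hST.notMem_of_mem_right (hv x hx)
  have hv'S : ∀ x ∈ v'.toList, x ∉ S := fun x hx => hST.notMem_of_mem_right (hv' x hx)
  have huu' : u = u' := toList.injective <| by
    rw [← toList_mul_filter_eq hu hvS, ← toList_mul_filter_eq hu' hv'S, h]
  subst huu'
  exact Prod.ext rfl (mul_left_cancel h)

end FreeMonoid

namespace MonoidAlgebra

open scoped Pointwise

variable {R G : Type*} [Semiring R]

theorem support_coeff_mul_of_injOn [NoZeroDivisors R] [Mul G] [DecidableEq G] {f g : R[G]}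
    (h : (f.coeff.support ×ˢ g.coeff.support : Set (G × G)).InjOn fun p => p.1 * p.2) :
    (f * g).coeff.support = f.coeff.support * g.coeff.support := by
  refine (support_coeff_mul_subset f g).antisymm ?_
  intro w hw
  obtain ⟨a, ha, b, hb, rfl⟩ := Finset.mem_mul.mp hw
  have hunique : UniqueMul f.coeff.support g.coeff.support a b := fun a' b' ha' hb' hab =>
    Prod.ext_iff.mp (h (x₁ := (a', b')) (x₂ := (a, b)) ⟨ha', hb'⟩ ⟨ha, hb⟩ hab)
  rw [Finsupp.mem_support_iff, coeff_mul_mul_of_uniqueMul hunique]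
  exact mul_ne_zero (Finsupp.mem_support_iff.mp ha) (Finsupp.mem_support_iff.mp hb)

theorem card_support_coeff_mul_of_injOn [NoZeroDivisors R] [Mul G] {f g : R[G]}
    (h : (f.coeff.support ×ˢ g.coeff.support : Set (G × G)).InjOn fun p => p.1 * p.2) :
    (f * g).coeff.support.card = f.coeff.support.card * g.coeff.support.card := by
  classical
  rw [support_coeff_mul_of_injOn h, Finset.card_mul_iff.mpr h]

theorem card_support_coeff_one_add [Nontrivial R] [Monoid G] {P : R[G]} (hP : P.coeff 1 = 0) :
    (1 + P).coeff.support.card = 1 + P.coeff.support.card := by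
  classical
  have hdisj : Disjoint (1 : R[G]).coeff.support P.coeff.support := by
    rw [support_coeff_one, ← Finset.singleton_one, Finset.disjoint_singleton_left]
    exact Finsupp.notMem_support_iff.mpr hP
  rw [coeff_add, Finsupp.support_add_eq hdisj, Finset.card_union_of_disjoint hdisj,
    support_coeff_one, Finset.card_one]

theorem coeff_one_mul_freeMonoid {α : Type*} (p q : R[FreeMonoid α]) :
    (p * q).coeff 1 = p.coeff 1 * q.coeff 1 := by
  simpa using coeff_mul_mul_of_uniqueMul <|
    FreeMonoid.uniqueMul_one_one p.coeff.support q.coeff.support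

theorem coeff_one_list_prod_freeMonoid {α : Type*} (L : List R[FreeMonoid α]) :
    L.prod.coeff 1 = (L.map fun p => p.coeff 1).prod := by
  induction L with
  | nil => simp
  | cons p L ih => rw [List.prod_cons, coeff_one_mul_freeMonoid, ih, List.map_cons, List.prod_cons]

end MonoidAlgebra

theorem mem_lettersOf {p : A} {w : FreeMonoid ℕ} (hw : w ∈ p.coeff.support) {x : ℕ}
    (hx : x ∈ w.toList) : x ∈ lettersOf p :=
  ⟨w, hw, hx⟩

theorem ell_one : ell 1 = 1 := by
  rw [ell, MonoidAlgebra.support_coeff_one, Finset.card_one]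

theorem lettersOf_one : lettersOf 1 = ∅ := by
  refine Set.eq_empty_of_forall_notMem fun x ⟨w, hw, hx⟩ => ?_
  rw [MonoidAlgebra.support_coeff_one, Finset.mem_one] at hw
  simp [hw] at hx

theorem lettersOf_mul_subset (p q : A) : lettersOf (p * q) ⊆ lettersOf p ∪ lettersOf q := by
  classical
  rintro x ⟨w, hw, hx⟩
  obtain ⟨u, hu, v, hv, rfl⟩ := Finset.mem_mul.mp (MonoidAlgebra.support_coeff_mul_subset p q hw)
  rw [FreeMonoid.toList_mul, List.mem_append] at hx
  exact hx.imp (mem_lettersOf hu) (mem_lettersOf hv)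

theorem ell_mul {p q : A} (h : Disjoint (lettersOf p) (lettersOf q)) :
    ell (p * q) = ell p * ell q := by
  refine MonoidAlgebra.card_support_coeff_mul_of_injOn <|
    (FreeMonoid.injOn_mul_of_disjoint h).mono fun _ huv => ?_
  exact ⟨fun _ => mem_lettersOf huv.1, fun _ => mem_lettersOf huv.2⟩

theorem lettersOf_list_prod_subset (L : List A) : lettersOf L.prod ⊆ ⋃ p ∈ L, lettersOf p := by
  induction L with
  | nil => simp [lettersOf_one]
  | cons p L ih =>
    simp only [List.prod_cons, List.mem_cons, Set.iUnion_iUnion_eq_or_left]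
    exact (lettersOf_mul_subset p L.prod).trans (Set.union_subset_union_right _ ih)

theorem ell_list_prod {L : List A}
    (hL : L.Pairwise fun p q => Disjoint (lettersOf p) (lettersOf q)) :
    ell L.prod = (L.map ell).prod := by
  induction L with
  | nil => exact ell_one
  | cons p L ih =>
    rw [List.pairwise_cons] at hL
    have hdisj : Disjoint (lettersOf p) (lettersOf L.prod) :=
      (Set.disjoint_iUnion₂_right.mpr hL.1).mono_right (lettersOf_list_prod_subset L)
    rw [List.prod_cons, ell_mul hdisj, ih hL.2, List.map_cons, List.prod_cons]

/-- If `W 0, …, W (k-1)` have zero constant term, pairwise disjoint sets of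
occurring indeterminates, and odd numbers of monomials, then
`1 + W 0 ⋯ W (k-1)` has `1 + ∏ i, ell (W i)` monomials, an even number. -/
theorem one_add_prod_even_length (k : ℕ) (hk : 1 ≤ k) (W : Fin k → A)
    (hconst : ∀ i, (W i).coeff 1 = 0)
    (hdisj : ∀ i j, i ≠ j → Disjoint (lettersOf (W i)) (lettersOf (W j)))
    (hodd : ∀ i, Odd (ell (W i))) :
    ell (1 + (List.ofFn W).prod) = 1 + ∏ i, ell (W i) ∧
    Even (ell (1 + (List.ofFn W).prod)) := by
  have hprod_const : (List.ofFn W).prod.coeff 1 = 0 := by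
    rw [MonoidAlgebra.coeff_one_list_prod_freeMonoid, List.map_ofFn, List.prod_ofFn]
    exact Finset.prod_eq_zero (Finset.mem_univ ⟨0, hk⟩) (hconst _)
  have hprod_ell : ell (List.ofFn W).prod = ∏ i, ell (W i) := by
    rw [ell_list_prod (List.pairwise_ofFn.mpr fun i j hij => hdisj i j hij.ne), List.map_ofFn,
      List.prod_ofFn]
    rfl
  have hell : ell (1 + (List.ofFn W).prod) = 1 + ∏ i, ell (W i) := by
    rw [← hprod_ell]
    exact MonoidAlgebra.card_support_coeff_one_add hprod_const
  refine ⟨hell, ?_⟩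
  rw [hell, add_comm]
  exact (Finset.prod_induction _ Odd (fun _ _ => Odd.mul) odd_one fun i _ => hodd i).add_one
end

section
/- Let W be a nonzero homogeneous element (all monomials of the same positive length) of the free noncommutative algebra over F_2 whose monomials involve only letters distinct from b_1, b_2, b_3, and let ℓ(W) be the number of monomials of W. Then the element b_3 + W + W² + W b_2 b_3 W + b_1 b_2 W² + b_1 b_2 W b_2 b_3 W satisfies τ_{b_3} equal to 2·ℓ(W)² + 1, which is odd; here max_{b_3} of this element equals 1 and τ_{b_3} counts the monomials containing exactly one occurrence of b_3. -/
/-!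
Grade words both by length and by the number of occurrences of `b₃`. The element splits as
`P + Q`, where every word of `P = b₃ + W b₂ b₃ W + b₁ b₂ W b₂ b₃ W` contains `b₃` exactly once
and no word of `Q = W + W² + b₁ b₂ W²` contains it; hence `max_{b₃} = 1` and `τ_{b₃}` is the
number of words of `P`. For `W` of degree `d` the summands of `P` have lengths `1`, `2d + 2`,
`2d + 4`, so their supports are disjoint, and since `W` is homogeneous a word of `W · V` factors
uniquely, giving `ℓ(W)²` words for each of the last two.
-/

open scoped Pointwise

theorem FreeMonoid.mul_inj_of_length_eq {α : Type*} {u u' v v' : FreeMonoid α}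
    (hlen : u.length = u'.length) (h : u * v = u' * v') : u = u' ∧ v = v' := by
  have happ := congrArg FreeMonoid.toList h
  simp only [FreeMonoid.toList_mul] at happ
  obtain ⟨hu, hv⟩ := List.append_inj happ hlen
  exact ⟨FreeMonoid.toList.injective hu, FreeMonoid.toList.injective hv⟩

namespace MonoidAlgebra

variable {k G ι : Type*} [Semiring k]

def IsHomogeneousBy (deg : G → ι) (p : k[G]) (i : ι) : Prop :=
  ∀ w ∈ p.coeff.support, deg w = i

theorem isHomogeneousBy_single (deg : G → ι) (g : G) (r : k) :
    IsHomogeneousBy deg (single g r) (deg g) :=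
  fun _ hw => congrArg deg (Finset.mem_singleton.mp (Finsupp.support_single_subset hw))

namespace IsHomogeneousBy

variable {deg : G → ι} {p q : k[G]} {i j : ι}

theorem add (hp : IsHomogeneousBy deg p i) (hq : IsHomogeneousBy deg q i) :
    IsHomogeneousBy deg (p + q) i := by
  classical
  intro w hw
  rcases Finset.mem_union.mp (Finsupp.support_add hw) with h | h
  exacts [hp w h, hq w h]

theorem mul [Mul G] [Add ι] (hdeg : ∀ u v, deg (u * v) = deg u + deg v)
    (hp : IsHomogeneousBy deg p i) (hq : IsHomogeneousBy deg q j) :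
    IsHomogeneousBy deg (p * q) (i + j) := by
  classical
  intro w hw
  obtain ⟨u, hu, v, hv, rfl⟩ := Finset.mem_mul.mp (support_coeff_mul_subset p q hw)
  rw [hdeg, hp u hu, hq v hv]

theorem disjoint (hp : IsHomogeneousBy deg p i) (hq : IsHomogeneousBy deg q j) (hij : i ≠ j) :
    Disjoint p.coeff.support q.coeff.support :=
  Finset.disjoint_left.mpr fun w hwp hwq => hij ((hp w hwp).symm.trans (hq w hwq))

end IsHomogeneousBy

theorem card_support_coeff_mul_of_isHomogeneousBy_length {α : Type*} [NoZeroDivisors k]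
    {p : k[FreeMonoid α]} {n : ℕ}
    (hp : IsHomogeneousBy FreeMonoid.length p n) (q : k[FreeMonoid α]) :
    (p * q).coeff.support.card = p.coeff.support.card * q.coeff.support.card := by
  classical
  have hunique : ∀ u ∈ p.coeff.support, ∀ v ∈ q.coeff.support,
      UniqueMul p.coeff.support q.coeff.support u v := fun u hu _ _ u' v' hu' _ h =>
    FreeMonoid.mul_inj_of_length_eq ((hp u' hu').trans (hp u hu).symm) h
  have hsupp : (p * q).coeff.support = p.coeff.support * q.coeff.support := by
    refine (support_coeff_mul_subset p q).antisymm fun w hw => ?_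
    obtain ⟨u, hu, v, hv, rfl⟩ := Finset.mem_mul.mp hw
    rw [Finsupp.mem_support_iff, coeff_mul_mul_of_uniqueMul (hunique u hu v hv)]
    exact mul_ne_zero (Finsupp.mem_support_iff.mp hu) (Finsupp.mem_support_iff.mp hv)
  rw [hsupp, Finset.card_mul_iff]
  rintro ⟨u, v⟩ ⟨hu, hv⟩ ⟨u', v'⟩ ⟨hu', hv'⟩ h
  exact Prod.ext_iff.mpr (hunique u' hu' v' hv' hu hv h)

end MonoidAlgebra

open MonoidAlgebra

local instance : DecidableEq (FreeMonoid ℕ) := inferInstanceAs (DecidableEq (List ℕ))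

theorem countLetter_mul (i : ℕ) (u v : FreeMonoid ℕ) :
    countLetter i (u * v) = countLetter i u + countLetter i v := by
  simp only [countLetter, FreeMonoid.toList_mul, List.count_append]

theorem isHomogeneousBy_b {ι : Type*} (deg : FreeMonoid ℕ → ι) (j : ℕ) :
    IsHomogeneousBy deg (b j) (deg (FreeMonoid.of j)) :=
  isHomogeneousBy_single _ _ _

theorem isHomogeneousBy_length_b (j : ℕ) : IsHomogeneousBy FreeMonoid.length (b j) 1 :=
  isHomogeneousBy_b _ j

theorem isHomogeneousBy_countLetter_b_self (i : ℕ) : IsHomogeneousBy (countLetter i) (b i) 1 := by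
  simpa [countLetter] using isHomogeneousBy_b (countLetter i) i

theorem isHomogeneousBy_countLetter_b_of_ne {i j : ℕ} (h : j ≠ i) :
    IsHomogeneousBy (countLetter i) (b j) 0 := by
  simpa [countLetter, h] using isHomogeneousBy_b (countLetter i) j

theorem ell_b (j : ℕ) : ell (b j) = 1 := by
  simp [ell, b, coeff_single]

theorem ell_mul_of_isHomogeneousBy_length {p : A} {n : ℕ}
    (hp : IsHomogeneousBy FreeMonoid.length p n) (q : A) : ell (p * q) = ell p * ell q :=
  card_support_coeff_mul_of_isHomogeneousBy_length hp q

theorem ell_b_mul (j : ℕ) (q : A) : ell (b j * q) = ell q := by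
  rw [ell_mul_of_isHomogeneousBy_length (isHomogeneousBy_length_b j), ell_b, one_mul]

theorem ell_add_of_disjoint {p q : A} (h : Disjoint p.coeff.support q.coeff.support) :
    ell (p + q) = ell p + ell q := by
  rw [ell, coeff_add, Finsupp.support_add_eq h, Finset.card_union_of_disjoint h, ell, ell]

section TopComponent

variable {i k : ℕ} {p q : A}

theorem support_coeff_add_of_countLetter_lt (hp : IsHomogeneousBy (countLetter i) p k)
    (hq : ∀ w ∈ q.coeff.support, countLetter i w < k) :
    (p + q).coeff.support = p.coeff.support ∪ q.coeff.support := by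
  refine Finsupp.support_add_eq (Finset.disjoint_left.mpr fun w hwp hwq => ?_)
  exact (hq w hwq).ne (hp w hwp)

theorem maxLetter_add_of_countLetter_lt (hp0 : p ≠ 0) (hp : IsHomogeneousBy (countLetter i) p k)
    (hq : ∀ w ∈ q.coeff.support, countLetter i w < k) : maxLetter i (p + q) = k := by
  rw [maxLetter, support_coeff_add_of_countLetter_lt hp hq]
  obtain ⟨w, hw⟩ : p.coeff.support.Nonempty :=
    Finsupp.support_nonempty_iff.mpr fun h => hp0 (coeff_inj.mp h)
  refine le_antisymm (Finset.sup_le fun v hv => ?_)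
    ((hp w hw).symm.le.trans (Finset.le_sup (Finset.mem_union_left _ hw)))
  rcases Finset.mem_union.mp hv with h | h
  exacts [(hp v h).le, (hq v h).le]

theorem tau_add_of_countLetter_lt (hp0 : p ≠ 0) (hp : IsHomogeneousBy (countLetter i) p k)
    (hq : ∀ w ∈ q.coeff.support, countLetter i w < k) : tau i (p + q) = ell p := by
  rw [tau, maxLetter_add_of_countLetter_lt hp0 hp hq, support_coeff_add_of_countLetter_lt hp hq,
    Finset.filter_union, Finset.filter_true_of_mem hp,
    Finset.filter_false_of_mem fun w hw => (hq w hw).ne, Finset.union_empty, ell]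

end TopComponent

noncomputable def b3Linear (W : A) : A :=
  b 3 + (W * (b 2 * (b 3 * W)) + b 1 * (b 2 * (W * (b 2 * (b 3 * W)))))

noncomputable def b3Free (W : A) : A :=
  W + W * W + b 1 * (b 2 * (W * W))

section Monodromy

variable {W : A}

theorem b3Linear_add_b3Free (W : A) :
    b3Linear W + b3Free W = b 3 + W + W ^ 2 + W * b 2 * b 3 * W + b 1 * b 2 * W ^ 2 +
      b 1 * b 2 * W * b 2 * b 3 * W := by
  simp only [b3Linear, b3Free, pow_two, mul_assoc]
  abel

theorem isHomogeneousBy_countLetter_b3Linear (hW : IsHomogeneousBy (countLetter 3) W 0) :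
    IsHomogeneousBy (countLetter 3) (b3Linear W) 1 := by
  have hc := countLetter_mul 3
  have hb2 := isHomogeneousBy_countLetter_b_of_ne (show 2 ≠ 3 by decide)
  have hX := hW.mul hc (hb2.mul hc ((isHomogeneousBy_countLetter_b_self 3).mul hc hW))
  exact (isHomogeneousBy_countLetter_b_self 3).add
    (hX.add ((isHomogeneousBy_countLetter_b_of_ne (by decide)).mul hc (hb2.mul hc hX)))

theorem isHomogeneousBy_countLetter_b3Free (hW : IsHomogeneousBy (countLetter 3) W 0) :
    IsHomogeneousBy (countLetter 3) (b3Free W) 0 := by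
  have hc := countLetter_mul 3
  have hWW := hW.mul hc hW
  exact (hW.add hWW).add ((isHomogeneousBy_countLetter_b_of_ne (by decide)).mul hc
    ((isHomogeneousBy_countLetter_b_of_ne (by decide)).mul hc hWW))

theorem ell_b3Linear {d : ℕ} (hW : IsHomogeneousBy FreeMonoid.length W d) :
    ell (b3Linear W) = 2 * ell W ^ 2 + 1 := by
  have hl := FreeMonoid.length_mul (α := ℕ)
  have hb := isHomogeneousBy_length_b
  have hX := hW.mul hl ((hb 2).mul hl ((hb 3).mul hl hW))
  have hZ := (hb 1).mul hl ((hb 2).mul hl hX)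
  rw [b3Linear, ell_add_of_disjoint, ell_add_of_disjoint (hX.disjoint hZ (by omega))]
  · simp only [ell_b, ell_b_mul, ell_mul_of_isHomogeneousBy_length hW]
    ring
  · exact Disjoint.mono_right Finsupp.support_add
      (Finset.disjoint_union_right.mpr
        ⟨(hb 3).disjoint hX (by omega), (hb 3).disjoint hZ (by omega)⟩)

end Monodromy

theorem tau_third_power_monodromy_general (W : A)
    (hhom : ∃ d, 0 < d ∧ ∀ w ∈ W.coeff.support, (FreeMonoid.toList w).length = d)
    (hletters : ∀ w ∈ W.coeff.support, ∀ j ∈ FreeMonoid.toList w, j ∉ ({1, 2, 3} : Set ℕ)) :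
    maxLetter 3 (b 3 + W + W ^ 2 + W * b 2 * b 3 * W + b 1 * b 2 * W ^ 2 +
        b 1 * b 2 * W * b 2 * b 3 * W) = 1 ∧
    tau 3 (b 3 + W + W ^ 2 + W * b 2 * b 3 * W + b 1 * b 2 * W ^ 2 +
        b 1 * b 2 * W * b 2 * b 3 * W) = 2 * (ell W) ^ 2 + 1 ∧
    Odd (2 * (ell W) ^ 2 + 1) := by
  obtain ⟨d, -, hlen⟩ := hhom
  have hWc : IsHomogeneousBy (countLetter 3) W 0 := fun w hw =>
    List.count_eq_zero.mpr fun h => hletters w hw 3 h (by simp)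
  have hell : ell (b3Linear W) = 2 * ell W ^ 2 + 1 := ell_b3Linear (d := d) hlen
  have hP0 : b3Linear W ≠ 0 := fun h => by simp [h, ell] at hell
  have hP := isHomogeneousBy_countLetter_b3Linear hWc
  have hQ : ∀ w ∈ (b3Free W).coeff.support, countLetter 3 w < 1 := fun w hw => by
    simp [isHomogeneousBy_countLetter_b3Free hWc w hw]
  rw [← b3Linear_add_b3Free, maxLetter_add_of_countLetter_lt hP0 hP hQ,
    tau_add_of_countLetter_lt hP0 hP hQ, hell]
  exact ⟨rfl, rfl, odd_two_mul_add_one _⟩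

/-- The element computing the third-power monodromy image of `b 3` has
`max_{b_3} = 1` and an odd `τ_{b_3}`, namely `2 ℓ(W)² + 1`. -/
theorem tau_third_power_monodromy (W : A) (hW : W ≠ 0)
    (hhom : ∃ d, 0 < d ∧ ∀ w ∈ W.coeff.support, (FreeMonoid.toList w).length = d)
    (hletters : ∀ w ∈ W.coeff.support, ∀ j ∈ FreeMonoid.toList w, j ∉ ({1, 2, 3} : Set ℕ)) :
    maxLetter 3 (b 3 + W + W ^ 2 + W * b 2 * b 3 * W + b 1 * b 2 * W ^ 2 +
        b 1 * b 2 * W * b 2 * b 3 * W) = 1 ∧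
    tau 3 (b 3 + W + W ^ 2 + W * b 2 * b 3 * W + b 1 * b 2 * W ^ 2 +
        b 1 * b 2 * W * b 2 * b 3 * W) = 2 * (ell W) ^ 2 + 1 ∧
    Odd (2 * (ell W) ^ 2 + 1) :=
  tau_third_power_monodromy_general W hhom hletters
end
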